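/- Let x be a positive light-like vector and y a unit space-like vector (y∘y = 1) in R^{n+1} with x∘y < 0. Then the vector v = (-1/(x∘y))·x + y lies in H^n (v∘v = -1 and v is positive), lies on the polar hyperplane of y (v∘y = 0), and its signed distance h to the horosphere determined by x satisfies e^h = -x∘y (i.e., -v∘x = -x∘y). -/

import Mathlib

/-- The Lorentzian inner product on `ℝ^{n+1}`. -/
def lprod {n : ℕ} (x y : Fin (n + 1) → ℝ) : ℝ :=
  -(x 0 * y 0) + ∑ i : Fin n, x i.succ * y i.succ

/-!
Bilinearity of `∘` together with `x∘x = 0` and `y∘y = 1` gives `v∘y = 0`, `v∘x = x∘y` and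
`v∘v = -1` by direct computation. For positivity, `v` is time-like and pairs negatively with
the future light-like vector `x`; by Cauchy–Schwarz on the space-like coordinates, a causal
vector with non-positive time coordinate pairs non-negatively with every future causal vector,
so `v 0 > 0`.
-/

section Lorentz

variable {n : ℕ}

lemma lprod_comm (x y : Fin (n + 1) → ℝ) : lprod x y = lprod y x := by
  simp only [lprod, mul_comm]

lemma lprod_add_left (x y z : Fin (n + 1) → ℝ) : lprod (x + y) z = lprod x z + lprod y z := by
  simp only [lprod, Pi.add_apply, add_mul, Finset.sum_add_distrib]
  ring

lemma lprod_smul_left (a : ℝ) (x y : Fin (n + 1) → ℝ) : lprod (a • x) y = a * lprod x y := by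
  simp only [lprod, Pi.smul_apply, smul_eq_mul, mul_assoc, ← Finset.mul_sum]
  ring

lemma lprod_add_right (x y z : Fin (n + 1) → ℝ) : lprod x (y + z) = lprod x y + lprod x z := by
  rw [lprod_comm, lprod_add_left, lprod_comm y, lprod_comm z]

lemma lprod_smul_right (a : ℝ) (x y : Fin (n + 1) → ℝ) : lprod x (a • y) = a * lprod x y := by
  rw [lprod_comm, lprod_smul_left, lprod_comm]

lemma sum_sq_succ_le_sq_zero_of_lprod_self_nonpos {x : Fin (n + 1) → ℝ} (hx : lprod x x ≤ 0) :
    ∑ i : Fin n, x i.succ ^ 2 ≤ x 0 ^ 2 := by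
  simp only [lprod] at hx
  simp only [sq]
  linarith

lemma lprod_nonneg_of_apply_zero_nonpos {v w : Fin (n + 1) → ℝ} (hv : lprod v v ≤ 0)
    (hw : lprod w w ≤ 0) (hw0 : 0 ≤ w 0) (hv0 : v 0 ≤ 0) : 0 ≤ lprod v w := by
  set S := ∑ i : Fin n, v i.succ * w i.succ
  have hS : S ^ 2 ≤ (v 0 * w 0) ^ 2 :=
    calc S ^ 2 ≤ (∑ i : Fin n, v i.succ ^ 2) * ∑ i : Fin n, w i.succ ^ 2 :=
          Finset.sum_mul_sq_le_sq_mul_sq _ _ _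
      _ ≤ v 0 ^ 2 * w 0 ^ 2 :=
          mul_le_mul (sum_sq_succ_le_sq_zero_of_lprod_self_nonpos hv)
            (sum_sq_succ_le_sq_zero_of_lprod_self_nonpos hw) (by positivity) (by positivity)
      _ = (v 0 * w 0) ^ 2 := (mul_pow _ _ _).symm
  have hvw : v 0 * w 0 ≤ 0 := mul_nonpos_of_nonpos_of_nonneg hv0 hw0
  have : |S| ≤ -(v 0 * w 0) := by rwa [← abs_of_nonpos hvw, ← sq_le_sq]
  show 0 ≤ -(v 0 * w 0) + S
  linarith [neg_abs_le S]

lemma apply_zero_pos_of_lprod_neg {v w : Fin (n + 1) → ℝ} (hv : lprod v v ≤ 0)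
    (hw : lprod w w ≤ 0) (hw0 : 0 ≤ w 0) (hvw : lprod v w < 0) : 0 < v 0 := by
  by_contra! hv0
  exact hvw.not_ge (lprod_nonneg_of_apply_zero_nonpos hv hw hw0 hv0)

end Lorentz

/-- The foot on the polar hyperplane of `y` of the perpendicular toward the
ideal point of `x`, and its signed distance to the horosphere of `x`. -/
theorem foot_on_polar_hyperplane {n : ℕ} (x y : Fin (n + 1) → ℝ)
    (hxx : lprod x x = 0) (hx0 : 0 < x 0)
    (hyy : lprod y y = 1) (hxy : lprod x y < 0) :
    letI v : Fin (n + 1) → ℝ := (-1 / lprod x y) • x + y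
    lprod v v = -1 ∧ 0 < v 0 ∧ lprod v y = 0 ∧
    -lprod v x = -lprod x y := by
  set v : Fin (n + 1) → ℝ := (-1 / lprod x y) • x + y with hv
  have hxy₀ : lprod x y ≠ 0 := hxy.ne
  have hvx : lprod v x = lprod x y := by
    simp only [hv, lprod_add_left, lprod_smul_left, hxx, lprod_comm y x]
    ring
  have hvy : lprod v y = 0 := by
    simp only [hv, lprod_add_left, lprod_smul_left, hyy]
    field_simp
    ring
  have hvv : lprod v v = -1 := by
    simp only [hv, lprod_add_left, lprod_smul_left, lprod_add_right, lprod_smul_right, hxx, hyy,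
      lprod_comm y x]
    field_simp
    ring
  exact ⟨hvv, apply_zero_pos_of_lprod_neg (by linarith) hxx.le hx0.le (hvx ▸ hxy), hvy,
    by rw [hvx]⟩
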